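/- Conversely, if F is long-tailed and there exists a function h(x) → ∞ with h(x) ≤ x/2 for large x such that J(x, h(x)) ≤ c F̄(h(x)) and K(x, h(x)) ≤ F̄(h(x)) for all large x (for some c > 1), then F is subexponential. -/

import Mathlib

open Filter MeasureTheory Set

noncomputable def tail (μ : Measure ℝ) (x : ℝ) : ℝ := (μ (Set.Ioi x)).toReal

noncomputable def convn (μ : Measure ℝ) : ℕ → Measure ℝ
  | 0 => Measure.dirac 0
  | n + 1 => ((convn μ n).prod μ).map (fun p : ℝ × ℝ => p.1 + p.2)

/-!
Write `F̄₂(x) = ∫ F̄(x - y) dF(y)`. Since `F` lives on `[0, ∞)`, the integrand is at least `F̄(x)`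
for `y ≤ x` and equals `1` for `y > x`, so `F̄₂(x) ≥ (2 - F̄(x)) F̄(x)`. Splitting the integral at
`h` and `x - h`, the two outer pieces are each at most `F̄(x - h) = (1 + K(x, h)) F̄(x)` and the
middle one is `J(x, h) F̄(x)`; hence `F̄₂ / F̄ ≤ 2 (1 + K) + J ≤ 2 + (2 + c) F̄(h(x)) → 2`.
-/

section Tail

variable (μ : Measure ℝ)

lemma tail_nonneg (x : ℝ) : 0 ≤ tail μ x := ENNReal.toReal_nonneg

lemma tail_antitone [IsFiniteMeasure μ] : Antitone (tail μ) :=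
  fun _ _ hst ↦ measureReal_mono (Ioi_subset_Ioi hst)

lemma tail_le_one [IsProbabilityMeasure μ] (x : ℝ) : tail μ x ≤ 1 := measureReal_le_one

lemma tendsto_tail_atTop [IsFiniteMeasure μ] : Tendsto (tail μ) atTop (nhds 0) := by
  have h := tendsto_measure_iInter_atTop (μ := μ) (fun x : ℝ ↦ measurableSet_Ioi.nullMeasurableSet)
    (fun _ _ hst ↦ Ioi_subset_Ioi hst) ⟨0, measure_ne_top μ _⟩
  rw [iInter_eq_empty_iff.2 fun x ↦ ⟨x, self_notMem_Ioi⟩, measure_empty] at h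
  exact (ENNReal.tendsto_toReal ENNReal.zero_ne_top).comp h

variable {μ}

lemma tail_pos [IsFiniteMeasure μ] {x : ℝ} (hx : 0 < μ (Ioi x)) : 0 < tail μ x :=
  ENNReal.toReal_pos hx.ne' (measure_ne_top μ _)

lemma tail_of_neg [IsProbabilityMeasure μ] (hsupp : μ (Iio 0) = 0) {t : ℝ} (ht : t < 0) :
    tail μ t = 1 := by
  have : μ (Ioi t)ᶜ = 0 := by
    rw [compl_Ioi]; exact measure_mono_null (Iic_subset_Iio.2 ht) hsupp
  rw [tail, (prob_compl_eq_zero_iff measurableSet_Ioi).1 this, ENNReal.toReal_one]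

end Tail

section Convolution

variable (μ : Measure ℝ)

lemma convn_one [SFinite μ] : convn μ 1 = μ := by
  rw [convn, convn, Measure.dirac_prod, Measure.map_map (by fun_prop) (by fun_prop)]
  simp [Function.comp_def]

lemma convn_two_apply_Ioi [SFinite μ] (x : ℝ) :
    convn μ 2 (Ioi x) = ∫⁻ a, μ (Ioi (x - a)) ∂μ := by
  have hpre : (fun p : ℝ × ℝ ↦ p.1 + p.2) ⁻¹' Ioi x = {p | x - p.1 < p.2} := by
    ext p; simp [sub_lt_iff_lt_add, add_comm]
  rw [convn, convn_one, Measure.map_apply (by fun_prop) measurableSet_Ioi, hpre,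
    Measure.prod_apply (measurableSet_lt (by fun_prop) measurable_snd)]
  rfl

lemma integrable_tail_sub [IsFiniteMeasure μ] (x : ℝ) :
    Integrable (fun a ↦ tail μ (x - a)) μ :=
  .of_bound ((tail_antitone μ).measurable.comp (by fun_prop)).aestronglyMeasurable (μ.real univ)
    (ae_of_all _ fun a ↦ by
      rw [Real.norm_of_nonneg (tail_nonneg μ _)]; exact measureReal_mono (subset_univ _))

lemma tail_convn_two [IsFiniteMeasure μ] (x : ℝ) :
    tail (convn μ 2) x = ∫ a, tail μ (x - a) ∂μ := by
  rw [integral_eq_lintegral_of_nonneg_ae (ae_of_all _ fun a ↦ tail_nonneg μ _)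
    (integrable_tail_sub μ x).aestronglyMeasurable, tail, convn_two_apply_Ioi]
  congr 1
  exact lintegral_congr fun a ↦ (ENNReal.ofReal_toReal (measure_ne_top μ _)).symm

end Convolution

section Bounds

variable {μ : Measure ℝ} [IsProbabilityMeasure μ]

lemma tail_add_indicator_le_tail_sub (hsupp : μ (Iio 0) = 0) (x : ℝ) {a : ℝ} (ha : 0 ≤ a) :
    tail μ x + (1 - tail μ x) * (Ioi x).indicator 1 a ≤ tail μ (x - a) := by
  by_cases hax : x < a
  · rw [indicator_of_mem (mem_Ioi.2 hax), tail_of_neg hsupp (show x - a < 0 by linarith)]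
    simp
  · rw [indicator_of_notMem (mt mem_Ioi.1 hax)]
    simpa using tail_antitone μ (by linarith : x - a ≤ x)

lemma two_sub_tail_mul_tail_le_tail_convn_two (hsupp : μ (Iio 0) = 0) (x : ℝ) :
    (2 - tail μ x) * tail μ x ≤ tail (convn μ 2) x := by
  have hnonneg : ∀ᵐ a ∂μ, 0 ≤ a := ae_iff.2 (by simp only [not_le]; exact hsupp)
  have hind : Integrable (fun a ↦ (1 - tail μ x) * (Ioi x).indicator (1 : ℝ → ℝ) a) μ :=
    ((integrable_const 1).indicator measurableSet_Ioi).const_mul _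
  calc (2 - tail μ x) * tail μ x
      = ∫ a, (tail μ x + (1 - tail μ x) * (Ioi x).indicator 1 a) ∂μ := by
        rw [integral_add (integrable_const _) hind, integral_const_mul,
          integral_indicator_one measurableSet_Ioi]
        simp only [integral_const, probReal_univ, one_smul]
        simp only [tail, measureReal_def]
        ring
    _ ≤ tail (convn μ 2) x := by
        rw [tail_convn_two]
        refine integral_mono_ae ((integrable_const _).add hind) (integrable_tail_sub μ x) ?_
        filter_upwards [hnonneg] with a ha using tail_add_indicator_le_tail_sub hsupp x ha

lemma tail_sub_le_indicator (x h a : ℝ) :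
    tail μ (x - a) ≤ tail μ (x - h) + (Ioi (x - h)).indicator 1 a +
      (Ioc h (x - h)).indicator (fun y ↦ tail μ (x - y)) a := by
  have h1 : 0 ≤ (Ioi (x - h)).indicator (1 : ℝ → ℝ) a :=
    indicator_nonneg (fun _ _ ↦ zero_le_one) a
  have h2 : 0 ≤ (Ioc h (x - h)).indicator (fun y ↦ tail μ (x - y)) a :=
    indicator_nonneg (fun _ _ ↦ tail_nonneg μ _) a
  rcases le_or_gt a h with hah | hha
  · linarith [tail_antitone μ (by linarith : x - h ≤ x - a)]
  rcases le_or_gt a (x - h) with haxh | hxha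
  · rw [indicator_of_mem (mem_Ioc.2 ⟨hha, haxh⟩)]
    linarith [tail_nonneg μ (x - h)]
  · rw [indicator_of_mem (mem_Ioi.2 hxha), Pi.one_apply]
    linarith [tail_le_one μ (x - a), tail_nonneg μ (x - h)]

lemma tail_convn_two_le (x h : ℝ) :
    tail (convn μ 2) x ≤ 2 * tail μ (x - h) + ∫ y in Ioc h (x - h), tail μ (x - y) ∂μ := by
  have hint1 : Integrable ((Ioi (x - h)).indicator (1 : ℝ → ℝ)) μ :=
    (integrable_const 1).indicator measurableSet_Ioi
  have hint01 : Integrable (fun a ↦ tail μ (x - h) + (Ioi (x - h)).indicator 1 a) μ :=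
    (integrable_const _).add hint1
  have hint2 : Integrable ((Ioc h (x - h)).indicator (fun y ↦ tail μ (x - y))) μ :=
    (integrable_tail_sub μ x).indicator measurableSet_Ioc
  rw [tail_convn_two]
  refine (integral_mono (integrable_tail_sub μ x) (hint01.add hint2)
    (tail_sub_le_indicator x h)).trans_eq ?_
  rw [integral_add' hint01 hint2, integral_add (integrable_const _) hint1,
    integral_indicator_one measurableSet_Ioi, integral_indicator measurableSet_Ioc]
  simp only [integral_const, probReal_univ, one_smul]
  simp only [tail, measureReal_def]
  ring

lemma tail_convn_two_div_le {x : ℝ} (hx : 0 < tail μ x) (h : ℝ) :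
    tail (convn μ 2) x / tail μ x ≤
      2 * (tail μ (x - h) / tail μ x) + ∫ y in Ioc h (x - h), tail μ (x - y) / tail μ x ∂μ := by
  rw [integral_div, mul_div_assoc', ← add_div, div_le_div_iff_of_pos_right hx]
  exact tail_convn_two_le x h

end Bounds

theorem longTailed_h_subexp_general (μ : Measure ℝ) [IsProbabilityMeasure μ]
    (hsupp : μ (Set.Iio 0) = 0) (hunb : ∀ x, 0 < μ (Set.Ioi x))
    (c : ℝ) (h : ℝ → ℝ)
    (hhinf : Tendsto h atTop atTop)
    (hJ : ∀ᶠ x in atTop,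
      (∫ y in Set.Ioc (h x) (x - h x), tail μ (x - y) / tail μ x ∂μ) ≤
        c * tail μ (h x))
    (hK : ∀ᶠ x in atTop, tail μ (x - h x) / tail μ x - 1 ≤ tail μ (h x)) :
    Tendsto (fun x => tail (convn μ 2) x / tail μ x) atTop (nhds 2) := by
  have hpos x := tail_pos (hunb x)
  have hlower : ∀ x, 2 - tail μ x ≤ tail (convn μ 2) x / tail μ x := fun x ↦
    (le_div_iff₀ (hpos x)).2 (two_sub_tail_mul_tail_le_tail_convn_two hsupp x)
  have hupper : ∀ᶠ x in atTop, tail (convn μ 2) x / tail μ x ≤ 2 + (2 + c) * tail μ (h x) := by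
    filter_upwards [hJ, hK] with x hJx hKx
    linarith [tail_convn_two_div_le (hpos x) (h x)]
  refine tendsto_of_tendsto_of_tendsto_of_le_of_le' ?_ ?_ (.of_forall hlower) hupper
  · simpa using (tendsto_tail_atTop μ).const_sub 2
  · simpa using (((tendsto_tail_atTop μ).comp hhinf).const_mul (2 + c)).const_add 2

/-- Lemma 1 (converse direction): if F is long-tailed and for some c > 1 there is
h(x) → ∞, h(x) ≤ x/2 for large x, with J(x,h(x)) ≤ c F̄(h(x)) and
K(x,h(x)) ≤ F̄(h(x)) for all large x, then F is subexponential. -/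
theorem longTailed_h_subexp (μ : Measure ℝ) [IsProbabilityMeasure μ]
    (hsupp : μ (Set.Iio 0) = 0) (hunb : ∀ x, 0 < μ (Set.Ioi x))
    (hlong : Tendsto (fun x => tail μ (x - 1) / tail μ x) atTop (nhds 1))
    (c : ℝ) (hc : 1 < c) (h : ℝ → ℝ)
    (hhinf : Tendsto h atTop atTop)
    (hhalf : ∀ᶠ x in atTop, h x ≤ x / 2)
    (hJ : ∀ᶠ x in atTop,
      (∫ y in Set.Ioc (h x) (x - h x), tail μ (x - y) / tail μ x ∂μ) ≤
        c * tail μ (h x))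
    (hK : ∀ᶠ x in atTop, tail μ (x - h x) / tail μ x - 1 ≤ tail μ (h x)) :
    Tendsto (fun x => tail (convn μ 2) x / tail μ x) atTop (nhds 2) :=
  longTailed_h_subexp_general μ hsupp hunb c h hhinf hJ hK
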